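/- Error representation for the multishift approximation: Let A be an n×n Hermitian complex matrix, let σ_1, …, σ_p be real numbers none of which is an eigenvalue of A, let ω_1, …, ω_p ∈ ℝ, let c ∈ ℂ^n, and let v be a unit vector. Suppose x^{(1)}, …, x^{(p)} ∈ ℂ^n are vectors whose residuals are collinear with v: c − (A − σ_i I) x^{(i)} = ρ_i v with ρ_i ∈ ℝ for i = 1, …, p. Define x_* = ∑_{i=1}^p ω_i (A − σ_i I)^{-1} c and x = ∑_{i=1}^p ω_i x^{(i)}. Then x_* − x = ∑_{i=1}^p ρ_i ω_i (A − σ_i I)^{-1} v = g(A) v where g(t) = ∑_{i=1}^p ρ_i ω_i/(t − σ_i), and consequently ‖x_* − x‖² = v* g(A)² v. -/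

import Mathlib

open Matrix

/-- The Euclidean norm of a complex vector. -/
noncomputable def enormC {n : ℕ} (c : Fin n → ℂ) : ℝ :=
  Real.sqrt (Complex.re (star c ⬝ᵥ c))

/-!
Each shifted error is a multiple of a resolvent applied to `v`:
`(A - σᵢ I)⁻¹ c - x⁽ⁱ⁾ = (A - σᵢ I)⁻¹ (c - (A - σᵢ I) x⁽ⁱ⁾) = ρᵢ (A - σᵢ I)⁻¹ v`.
The continuous functional calculus of `A` is linear and sends `t ↦ (t - σ)⁻¹` to the resolvent
`(A - σ I)⁻¹` as soon as `σ` lies off the spectrum, so the weighted sum of these errors is `g(A) v`.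
Finally `g(A)` is Hermitian with `g(A)² = (g²)(A)`, whence `‖g(A) v‖² = v* g(A)² v`.
-/

namespace Matrix

theorem nonsing_inv_mulVec_sub_eq_smul_of_sub_mulVec_eq_smul {m K : Type*} [Fintype m]
    [DecidableEq m] [CommRing K] {M : Matrix m m K} (hM : IsUnit M.det) {c y v : m → K} {r : K}
    (hres : c - M *ᵥ y = r • v) : M⁻¹ *ᵥ c - y = r • (M⁻¹ *ᵥ v) := by
  rw [← mulVec_smul, ← hres, mulVec_sub, mulVec_mulVec, nonsing_inv_mul M hM, one_mulVec]

namespace IsHermitian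

variable {m : Type*} [Fintype m] [DecidableEq m] {A : Matrix m m ℂ}

theorem cfc_sub_const (hA : A.IsHermitian) (σ : ℝ) :
    cfc (fun t => t - σ) A = A - (σ : ℂ) • 1 := by
  rw [cfc_sub .., cfc_id' .., cfc_const .., Algebra.algebraMap_eq_smul_one, Complex.coe_smul]

theorem isUnit_det_sub_smul_one (hA : A.IsHermitian) {σ : ℝ} (hσ : ∀ j, hA.eigenvalues j ≠ σ) :
    IsUnit (A - (σ : ℂ) • 1).det := by
  have hσA : σ ∉ spectrum ℝ A := by
    rw [hA.spectrum_real_eq_range_eigenvalues]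
    rintro ⟨j, hj⟩
    exact hσ j hj
  rw [← isUnit_iff_isUnit_det, Complex.coe_smul, ← Algebra.algebraMap_eq_smul_one, ← neg_sub]
  exact (spectrum.notMem_iff.mp hσA).neg

theorem cfc_inv_sub_const (hA : A.IsHermitian) {σ : ℝ} (hσ : ∀ j, hA.eigenvalues j ≠ σ) :
    cfc (fun t => (t - σ)⁻¹) A = (A - (σ : ℂ) • 1)⁻¹ := by
  rw [cfc_inv .., hA.cfc_sub_const, nonsing_inv_eq_ringInverse]
  rw [hA.spectrum_real_eq_range_eigenvalues]
  rintro _ ⟨j, rfl⟩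
  exact sub_ne_zero.mpr (hσ j)

theorem cfc_sum_div_sub {ι : Type*} [Fintype ι] (hA : A.IsHermitian) (r σ : ι → ℝ)
    (hσ : ∀ i j, hA.eigenvalues j ≠ σ i) :
    cfc (fun t => ∑ i, r i / (t - σ i)) A = ∑ i, (r i : ℂ) • (A - (σ i : ℂ) • 1)⁻¹ := by
  rw [← Finset.sum_fn, cfc_sum_univ _ A fun _ => A.finite_real_spectrum.continuousOn _]
  refine Finset.sum_congr rfl fun i _ => ?_
  simp_rw [div_eq_mul_inv]
  rw [cfc_const_mul _ _ A (A.finite_real_spectrum.continuousOn _), hA.cfc_inv_sub_const (hσ i)]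
  exact (Complex.coe_smul _ _).symm

end IsHermitian
end Matrix

open scoped ComplexOrder in
theorem enormC_sq {n : ℕ} (w : Fin n → ℂ) : enormC w ^ 2 = (star w ⬝ᵥ w).re :=
  Real.sq_sqrt (Complex.nonneg_iff.mp (dotProduct_star_self_nonneg w)).1

theorem Matrix.IsHermitian.enormC_mulVec_sq {n : ℕ} {G : Matrix (Fin n) (Fin n) ℂ}
    (hG : G.IsHermitian) (v : Fin n → ℂ) :
    enormC (G *ᵥ v) ^ 2 = (star v ⬝ᵥ (G ^ 2) *ᵥ v).re := by
  rw [enormC_sq, sq G, star_mulVec, ← dotProduct_mulVec, hG.eq, mulVec_mulVec]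

theorem Matrix.IsHermitian.enormC_cfc_mulVec_sq {n : ℕ} {A : Matrix (Fin n) (Fin n) ℂ}
    (hA : A.IsHermitian) (g : ℝ → ℝ) (v : Fin n → ℂ) :
    enormC (hA.cfc g *ᵥ v) ^ 2 = (star v ⬝ᵥ hA.cfc (fun t => g t ^ 2) *ᵥ v).re := by
  rw [← hA.cfc_eq, (cfc_predicate g A).isHermitian.enormC_mulVec_sq,
    ← cfc_pow g 2 A (A.finite_real_spectrum.continuousOn g), cfc_eq]

theorem multishift_error_representation
    {n p : ℕ} {A : Matrix (Fin n) (Fin n) ℂ} (hA : A.IsHermitian)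
    (σ : Fin p → ℝ) (hσ : ∀ i j, hA.eigenvalues j ≠ σ i)
    (ω : Fin p → ℝ) (c : Fin n → ℂ)
    {v : Fin n → ℂ}
    (x : Fin p → (Fin n → ℂ)) (ρ : Fin p → ℝ)
    (hres : ∀ i, c - (A - (σ i : ℂ) • 1) *ᵥ x i = ((ρ i : ℝ) : ℂ) • v)
    (xstar xapp : Fin n → ℂ)
    (hxstar : xstar = ∑ i, ((ω i : ℝ) : ℂ) • ((A - (σ i : ℂ) • 1)⁻¹ *ᵥ c))
    (hxapp : xapp = ∑ i, ((ω i : ℝ) : ℂ) • x i) :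
    xstar - xapp = ∑ i, ((ρ i * ω i : ℝ) : ℂ) • ((A - (σ i : ℂ) • 1)⁻¹ *ᵥ v) ∧
    xstar - xapp = (hA.cfc fun t => ∑ i, ρ i * ω i / (t - σ i)) *ᵥ v ∧
    enormC (xstar - xapp) ^ 2
      = Complex.re (star v ⬝ᵥ (hA.cfc fun t => (∑ i, ρ i * ω i / (t - σ i)) ^ 2) *ᵥ v) := by
  have herr : xstar - xapp = ∑ i, ((ρ i * ω i : ℝ) : ℂ) • ((A - (σ i : ℂ) • 1)⁻¹ *ᵥ v) := by
    rw [hxstar, hxapp, ← Finset.sum_sub_distrib]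
    refine Finset.sum_congr rfl fun i _ => ?_
    rw [← smul_sub, nonsing_inv_mulVec_sub_eq_smul_of_sub_mulVec_eq_smul
      (hA.isUnit_det_sub_smul_one (hσ i)) (hres i), smul_smul, Complex.ofReal_mul, mul_comm]
  have hcfc : xstar - xapp = (hA.cfc fun t => ∑ i, ρ i * ω i / (t - σ i)) *ᵥ v := by
    rw [herr, ← hA.cfc_eq, hA.cfc_sum_div_sub _ σ hσ, sum_mulVec]
    simp only [smul_mulVec]
  exact ⟨herr, hcfc, hcfc ▸ hA.enormC_cfc_mulVec_sq _ v⟩
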